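/- arXiv:math/0611524 — 4 statements merged into one kernel-verified Lean document; each statement's English description precedes it below -/
import Mathlib

section
/- Let m ≥ 1, let G be an invertible complex (2m+1)×(2m+1) matrix with Gᵀ = G, and let A be a complex (2m+1)×(2m+1) matrix satisfying Aᵀ·G + G·A = 0, and assume the characteristic polynomial of A has 2m+1 distinct roots in ℂ. If v₀ ∈ ℂ^{2m+1} is a nonzero vector with A·v₀ = 0, then v₀ is non-null: v₀ᵀ·G·v₀ ≠ 0. -/
/-!
Put `w = G v₀`. Skew-adjointness gives `Aᵀ w = -G A v₀ = 0`, so `w` is orthogonal, for the plain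
dot product, to the range of `A`; if `v₀` were null, `w` would be orthogonal to `v₀` as well.
Since the eigenvalues are distinct, `0` is a simple root of the characteristic polynomial, so the
generalized `0`-eigenspace is the line through `v₀` and it is complemented by a subspace of the
range of `A`. Hence `w` is orthogonal to everything, `w = 0`, and invertibility of `G` forces
`v₀ = 0`.
-/

open Matrix Polynomial

namespace Module.End

variable {K V : Type*} [Field K] [AddCommGroup V] [Module K V] [FiniteDimensional K V]

theorem rootMultiplicity_zero_charpoly_eq_one {f : End K V} (hnodup : f.charpoly.roots.Nodup)
    {v : V} (hv : v ≠ 0) (hfv : f v = 0) : f.charpoly.rootMultiplicity 0 = 1 := by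
  have hroot : f.charpoly.IsRoot 0 := by
    refine (hasEigenvalue_iff_isRoot_charpoly f 0).mp (hasEigenvalue_of_hasEigenvector ⟨?_, hv⟩)
    simpa [mem_eigenspace_iff] using hfv
  classical
  rw [← count_roots]
  exact Multiset.count_eq_one_of_mem hnodup ((mem_roots f.charpoly_monic.ne_zero).mpr hroot)

theorem maxGenEigenspace_zero_eq_span_singleton {f : End K V}
    (hsimple : f.charpoly.rootMultiplicity 0 = 1) {v : V} (hv : v ≠ 0) (hfv : f v = 0) :
    f.maxGenEigenspace 0 = K ∙ v := by
  have hvmem : v ∈ f.maxGenEigenspace 0 :=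
    (mem_maxGenEigenspace f 0 v).mpr ⟨1, by simpa using hfv⟩
  refine (Submodule.eq_of_le_of_finrank_le
    ((Submodule.span_singleton_le_iff_mem v _).mpr hvmem) ?_).symm
  rw [LinearMap.finrank_maxGenEigenspace_zero_eq, ← rootMultiplicity_eq_natTrailingDegree', hsimple,
    finrank_span_singleton hv]

theorem span_singleton_sup_range_eq_top {f : End K V}
    (hsimple : f.charpoly.rootMultiplicity 0 = 1) {v : V} (hv : v ≠ 0) (hfv : f v = 0) :
    K ∙ v ⊔ LinearMap.range f = ⊤ := by
  have hker : ⨆ n : ℕ, LinearMap.ker (f ^ n) = K ∙ v := by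
    rw [← maxGenEigenspace_zero_eq_span_singleton hsimple hv hfv]
    simp [← iSup_genEigenspace_eq, genEigenspace_nat]
  have hrange : ⨅ n : ℕ, LinearMap.range (f ^ n) ≤ LinearMap.range f := by
    simpa using iInf_le (fun n : ℕ => LinearMap.range (f ^ n)) 1
  rw [eq_top_iff, ← (LinearMap.isCompl_iSup_ker_pow_iInf_range_pow f).sup_eq_top, hker]
  exact sup_le_sup_left hrange _

end Module.End

theorem Matrix.eq_zero_of_dotProduct_eq_zero_of_transpose_mulVec_eq_zero {K n : Type*} [Field K]
    [Fintype n] {A : Matrix n n K} {v w : n → K} (hspan : K ∙ v ⊔ LinearMap.range A.mulVecLin = ⊤)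
    (hwv : w ⬝ᵥ v = 0) (hAw : Aᵀ *ᵥ w = 0) : w = 0 := by
  refine dotProduct_eq_zero_iff.mp fun u => ?_
  have hu : u ∈ K ∙ v ⊔ LinearMap.range A.mulVecLin := hspan ▸ Submodule.mem_top
  obtain ⟨_, hc, _, ⟨y, rfl⟩, rfl⟩ := Submodule.mem_sup.mp hu
  obtain ⟨c, rfl⟩ := Submodule.mem_span_singleton.mp hc
  rw [mulVecLin_apply, dotProduct_add, dotProduct_smul, hwv, dotProduct_mulVec,
    ← mulVec_transpose, hAw, smul_zero, zero_dotProduct, add_zero]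

theorem zero_eigenvector_nonnull_general (m : ℕ)
    (G A : Matrix (Fin (2*m+1)) (Fin (2*m+1)) ℂ)
    (hGinv : IsUnit G.det)
    (hA : Aᵀ * G + G * A = 0)
    (hdistinct : (Matrix.charpoly A).roots.Nodup ∧
      Multiset.card (Matrix.charpoly A).roots = 2*m+1)
    (v₀ : Fin (2*m+1) → ℂ) (hv₀ : v₀ ≠ 0) (hker : A.mulVec v₀ = 0) :
    v₀ ⬝ᵥ G.mulVec v₀ ≠ 0 := by
  intro hnull
  have hsimple : A.mulVecLin.charpoly.rootMultiplicity 0 = 1 :=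
    Module.End.rootMultiplicity_zero_charpoly_eq_one (by simpa using hdistinct.1) hv₀ hker
  have hspan := Module.End.span_singleton_sup_range_eq_top hsimple hv₀ hker
  have hAGv₀ : Aᵀ *ᵥ (G *ᵥ v₀) = 0 := by
    rw [mulVec_mulVec, eq_neg_of_add_eq_zero_left hA, neg_mulVec, ← mulVec_mulVec, hker,
      mulVec_zero, neg_zero]
  have hGv₀ : G *ᵥ v₀ = 0 :=
    eq_zero_of_dotProduct_eq_zero_of_transpose_mulVec_eq_zero hspan
      (by rwa [dotProduct_comm]) hAGv₀
  exact hv₀ (eq_zero_of_mulVec_eq_zero hGinv.ne_zero hGv₀)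

/-- For an element of the odd orthogonal Lie algebra with distinct eigenvalues, a nonzero
zero-eigenvector is non-null. -/
theorem zero_eigenvector_nonnull (m : ℕ) (hm : 1 ≤ m)
    (G A : Matrix (Fin (2*m+1)) (Fin (2*m+1)) ℂ)
    (hGinv : IsUnit G.det) (hGsymm : Gᵀ = G)
    (hA : Aᵀ * G + G * A = 0)
    (hdistinct : (Matrix.charpoly A).roots.Nodup ∧
      Multiset.card (Matrix.charpoly A).roots = 2*m+1)
    (v₀ : Fin (2*m+1) → ℂ) (hv₀ : v₀ ≠ 0) (hker : A.mulVec v₀ = 0) :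
    v₀ ⬝ᵥ G.mulVec v₀ ≠ 0 :=
  zero_eigenvector_nonnull_general m G A hGinv hA hdistinct v₀ hv₀ hker
end

section
/- Let x, y, f ∈ ℂ satisfy x² + y² = 2f/3. Then (x⁶ − f·x⁴ + (f²/4)·x²) + (y⁶ − f·y⁴ + (f²/4)·y²) = f³/54. In particular, if x⁶ − f x⁴ + (f²/4)x² = q, then y⁶ − f y⁴ + (f²/4)y² = f³/54 − q = q^∨. -/
/-- On the cameral curve `x² + y² = 2f/3`, the spectral sextics in `x` and `y` sum to
`f³/54`; hence the dual spectral curve has `q^∨ = f³/54 − q`. -/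
theorem g2_dual_spectral_identity (x y f : ℂ) (h : x^2 + y^2 = 2*f/3) :
    (x^6 - f*x^4 + (f^2/4)*x^2) + (y^6 - f*y^4 + (f^2/4)*y^2) = f^3/54 ∧
    ∀ q : ℂ, x^6 - f*x^4 + (f^2/4)*x^2 = q →
      y^6 - f*y^4 + (f^2/4)*y^2 = f^3/54 - q := by
  have hf : f = 3/2 * (x^2 + y^2) := by linear_combination (-3/2 : ℂ) * h
  subst hf
  constructor
  · ring
  · intro q hq
    linear_combination -hq
end

section
/- Let V = ℂ³ × ℂ³ and define the alternating three-form Ω((x₁,y₁),(x₂,y₂),(x₃,y₃)) = ⟨x₁, y₂ × y₃⟩ + ⟨x₂, y₃ × y₁⟩ + ⟨x₃, y₁ × y₂⟩, where ⟨·,·⟩ is the standard bilinear dot product on ℂ³ and × the standard cross product. Let a ∈ ℂ³ and let M be a 3×3 complex matrix with trace(M) = 0, and define T(x,y) = (a × x + M·y, a × y). Then T annihilates Ω infinitesimally: Ω(Tu₁, u₂, u₃) + Ω(u₁, Tu₂, u₃) + Ω(u₁, u₂, Tu₃) = 0 for all u₁, u₂, u₃ ∈ V. -/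
open Matrix

/-- The transformations `(x,y) ↦ (a×x + My, a×y)` with `tr M = 0` annihilate the
normal-form three-form `Ω` infinitesimally. -/
theorem stabilizer_lie_algebra_annihilates_threeform (a : Fin 3 → ℂ)
    (M : Matrix (Fin 3) (Fin 3) ℂ) (hM : M.trace = 0)
    (T : (Fin 3 → ℂ) × (Fin 3 → ℂ) → (Fin 3 → ℂ) × (Fin 3 → ℂ))
    (hT : ∀ p : (Fin 3 → ℂ) × (Fin 3 → ℂ),
      T p = (crossProduct a p.1 + M.mulVec p.2, crossProduct a p.2))
    (Ω : (Fin 3 → ℂ) × (Fin 3 → ℂ) → (Fin 3 → ℂ) × (Fin 3 → ℂ) →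
      (Fin 3 → ℂ) × (Fin 3 → ℂ) → ℂ)
    (hΩ : ∀ u₁ u₂ u₃ : (Fin 3 → ℂ) × (Fin 3 → ℂ),
      Ω u₁ u₂ u₃ = u₁.1 ⬝ᵥ crossProduct u₂.2 u₃.2 + u₂.1 ⬝ᵥ crossProduct u₃.2 u₁.2
        + u₃.1 ⬝ᵥ crossProduct u₁.2 u₂.2) :
    ∀ u₁ u₂ u₃ : (Fin 3 → ℂ) × (Fin 3 → ℂ),
      Ω (T u₁) u₂ u₃ + Ω u₁ (T u₂) u₃ + Ω u₁ u₂ (T u₃) = 0 := by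
  intro u₁ u₂ u₃
  simp only [hΩ, hT, trace, diag, Fin.sum_univ_three] at *
  simp only [crossProduct, mulVec, dotProduct, Fin.sum_univ_three, LinearMap.mk₂_apply,
    Pi.add_apply, cons_val_zero, cons_val_one, head_cons, cons_val_two, tail_cons, Pi.sub_apply]
  linear_combination (u₁.2 0*(u₂.2 1*u₃.2 2 - u₂.2 2*u₃.2 1) + u₁.2 1*(u₂.2 2*u₃.2 0 - u₂.2 0*u₃.2 2) + u₁.2 2*(u₂.2 0*u₃.2 1 - u₂.2 1*u₃.2 0)) * hM
end

section
/- Let V = ℂ³ × ℂ³ with ω((x₁,y₁),(x₂,y₂)) = ⟨x₁,y₂⟩ − ⟨x₂,y₁⟩ and Ω((x₁,y₁),(x₂,y₂),(x₃,y₃)) = ⟨x₁, y₂×y₃⟩ + ⟨x₂, y₃×y₁⟩ + ⟨x₃, y₁×y₂⟩, where ⟨·,·⟩ is the standard bilinear dot product on ℂ³ and × the standard cross product. Define k₀(x,y) = (−2y, 0), and for a ∈ ℂ³ and a symmetric 3×3 complex matrix M define φ₀(x,y) = (a × x + M·y, a × y). Then for all u₁ = (x₁,y₁) and u₂ = (x₂,y₂)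 in V one has ω(φ₀(k₀(u₁)), u₂) = −2⟨a, y₁ × y₂⟩ = Ω((−2a, 0), u₁, u₂). In particular the vector v₀ = (−2a, 0) ∈ V satisfies Ω(v₀, u₁, u₂) = ω(φ₀ k₀ u₁, u₂) for all u₁, u₂. -/
open Matrix

/-- The canonical vector `v₀ = (−2a, 0)` satisfies `Ω(v₀,u₁,u₂) = ω(φ₀ k₀ u₁, u₂)`, where
`k₀` is the operator `K_Ω` of the degenerate normal-form three-form and `φ₀` is an element
of the Lie algebra of its stabilizer in `Sp(6,ℂ)`. -/
theorem canonical_vector_solves_equation (a : Fin 3 → ℂ)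
    (M : Matrix (Fin 3) (Fin 3) ℂ) (hM : M.IsSymm)
    (k₀ φ₀ : (Fin 3 → ℂ) × (Fin 3 → ℂ) → (Fin 3 → ℂ) × (Fin 3 → ℂ))
    (hk₀ : ∀ p : (Fin 3 → ℂ) × (Fin 3 → ℂ), k₀ p = ((-2 : ℂ) • p.2, 0))
    (hφ₀ : ∀ p : (Fin 3 → ℂ) × (Fin 3 → ℂ),
      φ₀ p = (crossProduct a p.1 + M.mulVec p.2, crossProduct a p.2))
    (ω : (Fin 3 → ℂ) × (Fin 3 → ℂ) → (Fin 3 → ℂ) × (Fin 3 → ℂ) → ℂ)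
    (hω : ∀ u v : (Fin 3 → ℂ) × (Fin 3 → ℂ), ω u v = u.1 ⬝ᵥ v.2 - v.1 ⬝ᵥ u.2)
    (Ω : (Fin 3 → ℂ) × (Fin 3 → ℂ) → (Fin 3 → ℂ) × (Fin 3 → ℂ) →
      (Fin 3 → ℂ) × (Fin 3 → ℂ) → ℂ)
    (hΩ : ∀ u₁ u₂ u₃ : (Fin 3 → ℂ) × (Fin 3 → ℂ),
      Ω u₁ u₂ u₃ = u₁.1 ⬝ᵥ crossProduct u₂.2 u₃.2 + u₂.1 ⬝ᵥ crossProduct u₃.2 u₁.2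
        + u₃.1 ⬝ᵥ crossProduct u₁.2 u₂.2) :
    ∀ u₁ u₂ : (Fin 3 → ℂ) × (Fin 3 → ℂ),
      ω (φ₀ (k₀ u₁)) u₂ = -2 * (a ⬝ᵥ crossProduct u₁.2 u₂.2) ∧
      ω (φ₀ (k₀ u₁)) u₂ = Ω ((-2 : ℂ) • a, 0) u₁ u₂ := by
  intro u₁ u₂
  have key : ω (φ₀ (k₀ u₁)) u₂ = -2 * (a ⬝ᵥ crossProduct u₁.2 u₂.2) := by
    rw [hω, hφ₀, hk₀]
    simp only [crossProduct, Matrix.mulVec, dotProduct, LinearMap.mk₂_apply,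
      Fin.sum_univ_three, Prod.fst, Prod.snd, Pi.smul_apply, Pi.zero_apply,
      Pi.add_apply, Matrix.cons_val_zero, Matrix.cons_val_one, Matrix.head_cons,
      Matrix.cons_val_two, Matrix.tail_cons, smul_eq_mul]
    ring
  refine ⟨key, ?_⟩
  rw [key, hΩ]
  simp only [crossProduct, dotProduct, LinearMap.mk₂_apply, Fin.sum_univ_three,
    Prod.fst, Prod.snd, Pi.smul_apply, Pi.zero_apply, Matrix.cons_val_zero,
    Matrix.cons_val_one, Matrix.head_cons, Matrix.cons_val_two, Matrix.tail_cons,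
    smul_eq_mul]
  ring
end
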